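/- Let x ∈ ℓ∞ be the 0–1 sequence with x_n = 1 if 4^k ≤ n < 2·4^k for some integer k ≥ 0, and x_n = 0 otherwise. Then limsup_{n→∞} (Cx)_n = 2/3 and liminf_{n→∞} (Cx)_n = 1/3. -/

import Mathlib

open Filter BoundedContinuousFunction

noncomputable section

/-- `ℓ∞`: the space of bounded real sequences (indexed from `0`). -/
abbrev LInf : Type := BoundedContinuousFunction ℕ ℝ

/-- The Cesàro operator: the `n`-th entry (0-indexed) is the average of the first `n + 1`
entries, i.e. `(Cx)ₙ = (1/n) ∑_{k=1}^{n} x_k` in the 1-indexed notation. -/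
def cesaro (x : LInf) : LInf :=
  BoundedContinuousFunction.ofNormedAddCommGroup
    (fun n => (↑(n + 1))⁻¹ * ∑ k ∈ Finset.range (n + 1), x k)
    continuous_of_discreteTopology ‖x‖
    (by
      intro n
      have hn : (0:ℝ) < (n:ℝ) + 1 := by positivity
      have h1 : ‖∑ k ∈ Finset.range (n + 1), x k‖ ≤ ‖x‖ * ((n:ℝ) + 1) := by
        calc ‖∑ k ∈ Finset.range (n + 1), x k‖ ≤ ∑ k ∈ Finset.range (n + 1), ‖x‖ :=
              norm_sum_le_of_le _ (fun k _ => x.norm_coe_le_norm k)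
          _ = ‖x‖ * ((n:ℝ) + 1) := by simp [mul_comm]
      rw [norm_mul, norm_inv]
      have h2 : ‖((n+1 : ℕ) : ℝ)‖ = (n:ℝ) + 1 := by
        push_cast
        rw [Real.norm_eq_abs, abs_of_pos hn]
      rw [h2, inv_mul_le_iff₀ hn]
      exact h1.trans_eq (mul_comm _ _))

/-- The 0–1 sequence whose (1-indexed) `n`-th entry is `1` iff `4^k ≤ n < 2·4^k` for
some `k ≥ 0` (here 0-indexed: the entry at index `n` is for `n + 1`). -/
def zx : LInf :=
  BoundedContinuousFunction.ofNormedAddCommGroup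
    (Set.indicator {n : ℕ | ∃ k : ℕ, 4 ^ k ≤ n + 1 ∧ n + 1 < 2 * 4 ^ k} (fun _ => (1 : ℝ)))
    continuous_of_discreteTopology 1
    (by
      intro n
      by_cases h : n ∈ {n : ℕ | ∃ k : ℕ, 4 ^ k ≤ n + 1 ∧ n + 1 < 2 * 4 ^ k} <;>
        simp [Set.indicator, h])

/-!
Let `S N` be the number of ones among the first `N` terms. On a block of ones `[4^K, 2·4^K)`
`S` grows with slope `1`, on a block of zeros `[2·4^K, 4^(K+1))` it is constant, and
`3 S = 4^K - 1` just before each block of ones. Hence `N ≤ 3 S N ≤ 2 N + 1` for all `N`, with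
equality on the left at the end of every block of zeros and on the right at the end of every
block of ones. So the Cesàro means `S N / N` lie in `[1/3, 2/3 + 1/(3N)]` and come back to both
ends infinitely often.
-/

open Topology Finset

theorem Filter.limsup_liminf_eq_of_frequently_attained {α β : Type*} [ConditionallyCompleteLinearOrder β]
    [TopologicalSpace β] [OrderTopology β] {l : Filter α} [l.NeBot] {f g : α → β} {a b : β}
    (hf : ∀ᶠ x in l, a ≤ f x) (hfg : ∀ᶠ x in l, f x ≤ g x) (hg : Tendsto g l (𝓝 b))
    (ha : ∃ᶠ x in l, f x ≤ a) (hb : ∃ᶠ x in l, b ≤ f x) :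
    limsup f l = b ∧ liminf f l = a := by
  have hbdd_ge : IsBoundedUnder (· ≥ ·) l f := isBoundedUnder_of_eventually_ge hf
  have hbdd_le : IsBoundedUnder (· ≤ ·) l f := by
    obtain ⟨c, hc⟩ := hg.isBoundedUnder_le
    exact isBoundedUnder_of_eventually_le <|
      (hfg.and (eventually_map.1 hc)).mono fun _ h => h.1.trans h.2
  refine ⟨le_antisymm ?_ (le_limsup_of_frequently_le hb hbdd_le),
    le_antisymm (liminf_le_of_frequently_le ha hbdd_ge)
      (le_liminf_of_le hbdd_le.isCoboundedUnder_ge hf)⟩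
  calc limsup f l ≤ limsup g l :=
        limsup_le_limsup hfg hbdd_ge.isCoboundedUnder_le hg.isBoundedUnder_le
    _ = b := hg.limsup_eq

theorem Finset.sum_range_add_of_eq_const {M : Type*} [AddCommMonoid M] {f : ℕ → M} {a j : ℕ}
    {c : M} (h : ∀ i < j, f (a + i) = c) :
    ∑ i ∈ range (a + j), f i = ∑ i ∈ range a, f i + j • c := by
  rw [sum_range_add, sum_congr rfl fun i hi => h i (mem_range.1 hi), sum_const, card_range]

lemma zx_apply_eq_one {n K : ℕ} (h₁ : 4 ^ K ≤ n + 1) (h₂ : n + 1 < 2 * 4 ^ K) : zx n = 1 := by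
  simp only [zx, coe_ofNormedAddCommGroup]
  exact Set.indicator_of_mem (by exact ⟨K, h₁, h₂⟩) _

lemma zx_apply_eq_zero {n K : ℕ} (h₁ : 2 * 4 ^ K ≤ n + 1) (h₂ : n + 1 < 4 ^ (K + 1)) :
    zx n = 0 := by
  simp only [zx, coe_ofNormedAddCommGroup]
  refine Set.indicator_of_notMem ?_ _
  rintro ⟨k, hk₁, hk₂⟩
  rcases le_or_gt k K with hkK | hkK <;>
    have := Nat.pow_le_pow_right (by norm_num : 0 < 4) hkK <;> omega

/-- `zxSum N` counts the `m ∈ [1, N]` with `4^k ≤ m < 2·4^k` for some `k`. -/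
def zxSum (N : ℕ) : ℝ := ∑ n ∈ range N, zx n

lemma zxSum_of_le_four_pow (K : ℕ) {j : ℕ} (hj : j ≤ 4 ^ K) :
    zxSum (4 ^ K - 1 + j) = zxSum (4 ^ K - 1) + j := by
  have := Nat.one_le_pow K 4 (by norm_num)
  rw [zxSum, sum_range_add_of_eq_const (c := 1) fun i hi => zx_apply_eq_one (K := K) (by omega)
    (by omega), nsmul_one, zxSum]

lemma zxSum_of_le_two_mul_four_pow (K : ℕ) {j : ℕ} (hj : j ≤ 2 * 4 ^ K) :
    zxSum (2 * 4 ^ K - 1 + j) = zxSum (2 * 4 ^ K - 1) := by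
  have := Nat.one_le_pow K 4 (by norm_num)
  rw [zxSum, sum_range_add_of_eq_const (c := 0) fun i hi => zx_apply_eq_zero (K := K) (by omega)
    (by rw [pow_succ]; omega), smul_zero, add_zero, zxSum]

lemma zxSum_two_mul_four_pow (K : ℕ) :
    zxSum (2 * 4 ^ K - 1) = zxSum (4 ^ K - 1) + 4 ^ K := by
  have := Nat.one_le_pow K 4 (by norm_num)
  rw [show 2 * 4 ^ K - 1 = 4 ^ K - 1 + 4 ^ K by omega, zxSum_of_le_four_pow K le_rfl]
  norm_num

lemma three_mul_zxSum_four_pow (K : ℕ) : 3 * zxSum (4 ^ K - 1) = 4 ^ K - 1 := by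
  induction K with
  | zero => simp [zxSum]
  | succ K ih =>
    have := Nat.one_le_pow K 4 (by norm_num)
    rw [show 4 ^ (K + 1) - 1 = 2 * 4 ^ K - 1 + 2 * 4 ^ K by rw [pow_succ]; omega,
      zxSum_of_le_two_mul_four_pow K le_rfl, zxSum_two_mul_four_pow, pow_succ]
    linarith

lemma three_mul_zxSum_two_mul_four_pow (K : ℕ) :
    3 * zxSum (2 * 4 ^ K - 1) = 2 * ((2 * 4 ^ K - 1 : ℕ) : ℝ) + 1 := by
  have := Nat.one_le_pow K 4 (by norm_num)
  rw [zxSum_two_mul_four_pow, Nat.cast_sub (by omega)]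
  push_cast
  linarith [three_mul_zxSum_four_pow K]

lemma zxSum_bounds (N : ℕ) : (N : ℝ) ≤ 3 * zxSum N ∧ 3 * zxSum N ≤ 2 * N + 1 := by
  obtain ⟨K, hK, hK'⟩ : ∃ K, 4 ^ K ≤ N + 1 ∧ N + 1 < 4 * 4 ^ K :=
    ⟨Nat.log 4 (N + 1), Nat.pow_log_le_self 4 N.succ_ne_zero,
      pow_succ' 4 _ ▸ Nat.lt_pow_succ_log_self (by norm_num) _⟩
  have hS := three_mul_zxSum_four_pow K
  rcases lt_or_ge (N + 1) (2 * 4 ^ K) with hN | hN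
  · obtain ⟨j, rfl⟩ : ∃ j, N = 4 ^ K - 1 + j := ⟨N + 1 - 4 ^ K, by omega⟩
    rw [zxSum_of_le_four_pow K (by omega)]
    have hj : (j : ℝ) + 1 ≤ 4 ^ K := by exact_mod_cast (by omega : j + 1 ≤ 4 ^ K)
    rw [Nat.cast_add, Nat.cast_sub (Nat.one_le_pow K 4 (by norm_num))]
    push_cast
    constructor <;> linarith
  · obtain ⟨j, rfl⟩ : ∃ j, N = 2 * 4 ^ K - 1 + j := ⟨N + 1 - 2 * 4 ^ K, by omega⟩
    rw [zxSum_of_le_two_mul_four_pow K (by omega), zxSum_two_mul_four_pow]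
    have hj : (j : ℝ) + 1 ≤ 2 * 4 ^ K := by exact_mod_cast (by omega : j + 1 ≤ 2 * 4 ^ K)
    rw [Nat.cast_add, Nat.cast_sub (by omega)]
    push_cast
    constructor <;> linarith

lemma cesaro_zx_apply (n : ℕ) : cesaro zx n = zxSum (n + 1) / (n + 1 : ℕ) := by
  simp only [cesaro, coe_ofNormedAddCommGroup, zxSum]
  rw [inv_mul_eq_div]

lemma one_third_le_cesaro_zx (n : ℕ) : 1 / 3 ≤ cesaro zx n := by
  rw [cesaro_zx_apply, le_div_iff₀ (by positivity)]
  linarith [(zxSum_bounds (n + 1)).1]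

lemma cesaro_zx_le (n : ℕ) : cesaro zx n ≤ 2 / 3 + 1 / ((n : ℝ) + 1) / 3 := by
  have := (zxSum_bounds (n + 1)).2
  rw [cesaro_zx_apply, div_le_iff₀ (by positivity)]
  push_cast at this ⊢
  field_simp
  linarith

lemma cesaro_zx_four_pow_sub_two (K : ℕ) : cesaro zx (4 ^ (K + 1) - 2) = 1 / 3 := by
  have h4 : 4 ≤ 4 ^ (K + 1) := Nat.le_self_pow K.succ_ne_zero 4
  have hS := three_mul_zxSum_four_pow (K + 1)
  rw [cesaro_zx_apply, show 4 ^ (K + 1) - 2 + 1 = 4 ^ (K + 1) - 1 by omega,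
    div_eq_iff (Nat.cast_ne_zero.2 (by omega)), Nat.cast_sub (by omega)]
  push_cast
  linarith

lemma two_thirds_le_cesaro_zx_two_mul_four_pow_sub_two (K : ℕ) :
    2 / 3 ≤ cesaro zx (2 * 4 ^ K - 2) := by
  have := Nat.one_le_pow K 4 (by norm_num)
  have hS := three_mul_zxSum_two_mul_four_pow K
  rw [cesaro_zx_apply, show 2 * 4 ^ K - 2 + 1 = 2 * 4 ^ K - 1 by omega,
    le_div_iff₀ (Nat.cast_pos.2 (by omega))]
  linarith

theorem cesaro_zx_limsup_liminf :
    Filter.limsup (fun n => cesaro zx n) Filter.atTop = 2 / 3 ∧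
      Filter.liminf (fun n => cesaro zx n) Filter.atTop = 1 / 3 := by
  have hbound : Tendsto (fun n : ℕ => 2 / 3 + 1 / ((n : ℝ) + 1) / 3) atTop (𝓝 (2 / 3)) := by
    simpa using tendsto_one_div_add_atTop_nhds_zero_nat.div_const 3 |>.const_add (2 / 3 : ℝ)
  have hgrow (c : ℕ) (hc : 0 < c) : Tendsto (fun K => c * 4 ^ K - 2) atTop atTop :=
    (tendsto_sub_atTop_nat 2).comp <|
      (tendsto_pow_atTop_atTop_of_one_lt (by norm_num)).const_mul_atTop' hc
  refine limsup_liminf_eq_of_frequently_attained (.of_forall one_third_le_cesaro_zx)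
    (.of_forall cesaro_zx_le) hbound ?_ ?_
  · exact (hgrow 4 four_pos).frequently (.of_forall fun K => by
      rw [← pow_succ', cesaro_zx_four_pow_sub_two])
  · exact (hgrow 2 two_pos).frequently
      (.of_forall two_thirds_le_cesaro_zx_two_mul_four_pow_sub_two)

end
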